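/- For every a ∈ ℝ^n, the dimension of tconv(pos(a)) — i.e., the rank (finrank over ℝ) of the linear span of tconv({t·a : t ≥ 0}) — equals the cardinality of the set {c ∈ ℝ : c ≠ 0 and a_i = c for some i} of distinct nonzero coordinates of a. -/

import Mathlib

/-- A set `U ⊆ ℝ^n` is tropically convex (min-plus convention). -/
def TropConvex {n : ℕ} (U : Set (Fin n → ℝ)) : Prop :=
  ∀ x ∈ U, ∀ y ∈ U, ∀ a b : ℝ, min a b = 0 →
    (fun i => min (a + x i) (b + y i)) ∈ U

/-- The tropical convex hull: the intersection of all tropically convex sets containing `U`. -/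
def tconv {n : ℕ} (U : Set (Fin n → ℝ)) : Set (Fin n → ℝ) :=
  ⋂₀ {V | TropConvex V ∧ U ⊆ V}

/-!
The vectors `f ∘ a` with `f 0 = 0` form a tropically convex set containing the ray, so the span
of `tconv (pos a)` lies in the span of the indicators of the level sets `{a = c}`, `c ≠ 0`, and
these indicators are linearly independent. Conversely, tropical combinations of `0`, `a` and `2a`
give the ramps `min a b - min 0 b` for every real `b`, and a second difference of three ramps is a
hat function which, when narrow enough, is the indicator of a single level set.
-/

open Submodule

section LevelIndicator

variable {ι : Type*}

noncomputable def levelIndicator (a : ι → ℝ) (c : ℝ) : ι → ℝ := fun i => if a i = c then 1 else 0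

noncomputable def nonzeroValues [Fintype ι] (a : ι → ℝ) : Finset ℝ :=
  (Finset.univ.image a).erase 0

variable [Fintype ι] (a : ι → ℝ)

lemma mem_nonzeroValues {c : ℝ} : c ∈ nonzeroValues a ↔ c ≠ 0 ∧ ∃ i, a i = c := by
  simp [nonzeroValues]

lemma coe_nonzeroValues : (nonzeroValues a : Set ℝ) = {c : ℝ | c ≠ 0 ∧ ∃ i, a i = c} := by
  ext c
  simp [mem_nonzeroValues]

lemma linearIndependent_levelIndicator :
    LinearIndependent ℝ (fun c : nonzeroValues a => levelIndicator a c) := by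
  rw [linearIndependent_iff']
  intro s g hg c hc
  obtain ⟨i, hi⟩ := ((mem_nonzeroValues a).1 c.2).2
  simpa [levelIndicator, Finset.sum_apply, hi, Subtype.coe_inj, hc] using congrFun hg i

lemma comp_mem_span_levelIndicator {f : ℝ → ℝ} (hf : f 0 = 0) :
    f ∘ a ∈ span ℝ (Set.range fun c : nonzeroValues a => levelIndicator a c) := by
  rw [mem_span_range_iff_exists_fun]
  refine ⟨fun c => f c, funext fun i => ?_⟩
  simp only [Finset.sum_apply, Pi.smul_apply, levelIndicator, smul_eq_mul, mul_ite, mul_one,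
    mul_zero, Function.comp_apply]
  rw [Finset.sum_coe_sort (nonzeroValues a) (fun c => if a i = c then f c else 0),
    Finset.sum_ite_eq]
  split_ifs with h
  · rfl
  · have hai : a i = 0 := by_contra fun h0 => h ((mem_nonzeroValues a).2 ⟨h0, i, rfl⟩)
    rw [hai, hf]

end LevelIndicator

section Tropical

variable {n : ℕ}

lemma subset_tconv (U : Set (Fin n → ℝ)) : U ⊆ tconv U :=
  fun _ hx _ hV => hV.2 hx

lemma tropConvex_tconv (U : Set (Fin n → ℝ)) : TropConvex (tconv U) :=
  fun x hx y hy α β hαβ V hV => hV.1 x (hx V hV) y (hy V hV) α β hαβ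

lemma tconv_subset {U V : Set (Fin n → ℝ)} (hV : TropConvex V) (hUV : U ⊆ V) :
    tconv U ⊆ V :=
  fun _ hx => hx V ⟨hV, hUV⟩

lemma TropConvex.min_add_mem {U : Set (Fin n → ℝ)} (hU : TropConvex U) {x y : Fin n → ℝ}
    (hx : x ∈ U) (hy : y ∈ U) {b : ℝ} (hb : 0 ≤ b) : (fun i => min (x i) (b + y i)) ∈ U := by
  simpa using hU x hx y hy 0 b (min_eq_left hb)

lemma tropConvex_setOf_comp (a : Fin n → ℝ) :
    TropConvex {x | ∃ f : ℝ → ℝ, f 0 = 0 ∧ x = f ∘ a} := by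
  rintro _ ⟨f, hf, rfl⟩ _ ⟨g, hg, rfl⟩ α β hαβ
  exact ⟨fun t => min (α + f t) (β + g t), by simp [hf, hg, hαβ], rfl⟩

def posRay (a : Fin n → ℝ) : Set (Fin n → ℝ) := {x | ∃ t : ℝ, 0 ≤ t ∧ x = t • a}

variable (a : Fin n → ℝ)

lemma smul_mem_tconv_posRay {t : ℝ} (ht : 0 ≤ t) : t • a ∈ tconv (posRay a) :=
  subset_tconv _ ⟨t, ht, rfl⟩

lemma tconv_posRay_subset : tconv (posRay a) ⊆ {x | ∃ f : ℝ → ℝ, f 0 = 0 ∧ x = f ∘ a} :=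
  tconv_subset (tropConvex_setOf_comp a) fun _ ⟨t, _, hx⟩ => ⟨(t * ·), mul_zero t, hx⟩

def ramp (b t : ℝ) : ℝ := min t b - min 0 b

lemma ramp_comp_mem_span_tconv_posRay (b : ℝ) :
    (fun i => ramp b (a i)) ∈ span ℝ (tconv (posRay a)) := by
  have ha : a ∈ tconv (posRay a) := by simpa using smul_mem_tconv_posRay a zero_le_one
  have h0 : 0 ∈ tconv (posRay a) := by simpa using smul_mem_tconv_posRay a le_rfl
  have hconv := tropConvex_tconv (posRay a)
  rcases le_total 0 b with hb | hb
  · have hramp : (fun i => ramp b (a i)) = fun i => min (a i) (b + (0 : Fin n → ℝ) i) := by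
      funext i
      simp [ramp, hb]
    rw [hramp]
    exact subset_span (hconv.min_add_mem ha h0 hb)
  · have hramp : (fun i => ramp b (a i)) =
        (fun i => min (a i) (-b + ((2 : ℝ) • a) i)) - a := by
      funext i
      simp only [ramp, Pi.sub_apply, Pi.smul_apply, smul_eq_mul, min_eq_right hb]
      rw [← min_sub_sub_right, ← min_sub_sub_right, min_comm]
      congr 1 <;> ring
    rw [hramp]
    exact sub_mem (subset_span (hconv.min_add_mem ha (smul_mem_tconv_posRay a zero_le_two)
      (neg_nonneg.2 hb))) (subset_span ha)

end Tropical

section Tent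

/-- The hat function of height `1` at `c`, supported on `(c - ε, c + ε)`. -/
noncomputable def tent (c ε t : ℝ) : ℝ := ε⁻¹ * (2 * min t c - min t (c - ε) - min t (c + ε))

lemma tent_eq_ite {c ε t : ℝ} (hε : 0 < ε) (ht : t = c ∨ ε ≤ |t - c|) :
    tent c ε t = if t = c then 1 else 0 := by
  rcases ht with rfl | ht
  · rw [if_pos rfl, tent, min_self, min_eq_right (by linarith), min_eq_left (by linarith)]
    field_simp
    ring
  · have hne : t ≠ c := fun h => by simp [h] at ht; linarith
    rw [if_neg hne, tent]
    rcases le_abs'.1 ht with ht | ht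
    · rw [min_eq_left (by linarith), min_eq_left (by linarith), min_eq_left (by linarith)]
      ring
    · rw [min_eq_right (by linarith), min_eq_right (by linarith), min_eq_right (by linarith)]
      ring

lemma tent_sub_tent_zero (c ε t : ℝ) :
    tent c ε t - tent c ε 0 = ε⁻¹ * (2 * ramp c t - ramp (c - ε) t - ramp (c + ε) t) := by
  simp only [tent, ramp]
  ring

lemma Set.Finite.exists_pos_forall_eq_or_le_abs_sub {T : Set ℝ} (hT : T.Finite) (c : ℝ) :
    ∃ ε > 0, ∀ t ∈ T, t = c ∨ ε ≤ |t - c| := by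
  have hnhds : (T \ {c})ᶜ ∈ nhds c := hT.sdiff.isClosed.isOpen_compl.mem_nhds (by simp)
  obtain ⟨ε, hε, hball⟩ := Metric.mem_nhds_iff.1 hnhds
  refine ⟨ε, hε, fun t ht => or_iff_not_imp_left.2 fun htc => ?_⟩
  by_contra! hlt
  exact hball (by simpa [Real.dist_eq] using hlt) ⟨ht, htc⟩

end Tent

lemma levelIndicator_mem_span_tconv_posRay {n : ℕ} (a : Fin n → ℝ) {c : ℝ} (hc : c ≠ 0) :
    levelIndicator a c ∈ span ℝ (tconv (posRay a)) := by
  -- the tent must also vanish at `0`, the value of every ramp there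
  obtain ⟨ε, hε, hsep⟩ := ((Set.finite_range a).insert 0).exists_pos_forall_eq_or_le_abs_sub c
  have hlevel : levelIndicator a c = ε⁻¹ • ((2 : ℝ) • (fun i => ramp c (a i)) -
      (fun i => ramp (c - ε) (a i)) - (fun i => ramp (c + ε) (a i))) := by
    funext i
    have h0 : tent c ε 0 = 0 := by
      rw [tent_eq_ite hε (hsep 0 (Set.mem_insert _ _)), if_neg hc.symm]
    have hi := tent_eq_ite hε (hsep (a i) (Set.mem_insert_of_mem _ ⟨i, rfl⟩))
    simp only [levelIndicator, Pi.smul_apply, Pi.sub_apply, smul_eq_mul, ← hi,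
      ← tent_sub_tent_zero, h0, sub_zero]
  rw [hlevel]
  have hramp := ramp_comp_mem_span_tconv_posRay a
  exact smul_mem _ _ (sub_mem (sub_mem (smul_mem _ _ (hramp c)) (hramp _)) (hramp _))

theorem dim_tconv_ray (n : ℕ) (a : Fin n → ℝ) :
    Module.finrank ℝ
        (Submodule.span ℝ (tconv {x : Fin n → ℝ | ∃ t : ℝ, 0 ≤ t ∧ x = t • a})) =
      {c : ℝ | c ≠ 0 ∧ ∃ i, a i = c}.ncard := by
  change Module.finrank ℝ (span ℝ (tconv (posRay a))) = _
  have hspan : span ℝ (tconv (posRay a)) =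
      span ℝ (Set.range fun c : nonzeroValues a => levelIndicator a c) := by
    refine le_antisymm (span_le.2 fun x hx => ?_) (span_le.2 ?_)
    · obtain ⟨f, hf, rfl⟩ := tconv_posRay_subset a hx
      exact comp_mem_span_levelIndicator a hf
    · rintro _ ⟨c, rfl⟩
      exact levelIndicator_mem_span_tconv_posRay a ((mem_nonzeroValues a).1 c.2).1
  rw [hspan, finrank_span_eq_card (linearIndependent_levelIndicator a), ← coe_nonzeroValues,
    Set.ncard_coe_finset, Fintype.card_coe]
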